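/- Fix integers n ≥ 2, N ≥ 1, κ ≥ 1, maps f : ℝ^(2n−1) × ℝ → ℝ and ĉ : ℝ × ℝ^(2n−1) → ℝ, a dataset of triples (y_i⁺, ζ_i, u_i) ∈ ℝ × ℝ^(2n−1) × ℝ, i = 1,…,N, δ > 0, and a class-K∞ function γ such that ‖ζ_i⁺ − Φ(ζ, y_i⁺)‖ ≤ γ(‖ζ_i − ζ‖) for every i and every ζ ∈ ℝ^(2n−1). Suppose sets A⁰, …, A^κ ⊆ ℝ^(2n−1) are constructed as: A⁰ = ⋃_{i ∈ I₀} B̄(ζ_i⁺, r⁰_i) with B̄(ζ_i⁺, r⁰_i) ⊆ S_δ for each i ∈ I₀; and for 1 ≤ j ≤ κ, A^j = ⋃_{i ∈ I_j} B̄(ζ_i, γ⁻¹(r^j_i)) with B̄(ζ_i⁺, r^j_i) ⊆ A^{j−1} for each i ∈ I_j, where I₀,…,I_κ ⊆ {1,…,N} and all radii are nonnegative. If ζ₀ ∈ A^κ and A⁰ ⊆ A¹, then there exists a sequence of indices i : {1,2,3,…} → {1,…,N} such that the closed-loop trajectory defined by ζ_t := Φ(ζ_{t−1}, y_{i(t)}⁺)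 for t ≥ 1 satisfies |(ζ_t)ₙ| ≤ δ for all t ≥ κ (practical output regulation with accuracy δ). -/

import Mathlib

/-!
Each `A^j` with `1 ≤ j ≤ κ` lies in the backward reachable set of `A^{j-1}`: if `ζ` is within
`γ⁻¹(r^j_i)` of the data point `ζ_i`, the data bound puts `Φ(ζ, y_i⁺)` within `r^j_i` of `ζ_i⁺`,
hence in `A^{j-1}`. Because `A⁰ ⊆ A¹`, the same holds for `A⁰` itself, so from `ζ₀ ∈ A^κ` one can
descend to `A⁰` in `κ` steps and then stay in `A⁰ ⊆ S_δ` forever.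
-/

/-- The closed-loop one-step map with reference `yr`:
`Φ(ζ, yr) = (y₂,…,yₙ, f(ζ, ĉ(yr, ζ)), u₂,…,u_{n−1}, ĉ(yr, ζ))` for the augmented
state `ζ = (y₁,…,yₙ,u₁,…,u_{n−1}) ∈ ℝ^(2n−1)` (0-indexed coordinates). -/
noncomputable def Phi (n : ℕ) (f : EuclideanSpace ℝ (Fin (2*n-1)) → ℝ → ℝ)
    (chat : ℝ → EuclideanSpace ℝ (Fin (2*n-1)) → ℝ)
    (ζ : EuclideanSpace ℝ (Fin (2*n-1))) (yr : ℝ) : EuclideanSpace ℝ (Fin (2*n-1)) :=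
  WithLp.toLp 2 fun (k : Fin (2*n-1)) =>
    if (k : ℕ) = n - 1 then f ζ (chat yr ζ)
    else if h : (k : ℕ) = 2*n - 2 then chat yr ζ
    else ζ ⟨(k : ℕ) + 1, by have := k.isLt; omega⟩

/-- For a data triple `(y_i⁺, ζ_i, u_i)`, the shifted successor state
`ζ_i⁺ = (y_{i,2},…,y_{i,n}, y_i⁺, u_{i,2},…,u_{i,n−1}, u_i)`. -/
noncomputable def zplus (n : ℕ) (yp : ℝ) (ζ : EuclideanSpace ℝ (Fin (2*n-1))) (ui : ℝ) :
    EuclideanSpace ℝ (Fin (2*n-1)) :=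
  WithLp.toLp 2 fun (k : Fin (2*n-1)) =>
    if (k : ℕ) = n - 1 then yp
    else if h : (k : ℕ) = 2*n - 2 then ui
    else ζ ⟨(k : ℕ) + 1, by have := k.isLt; omega⟩

/-- Backward reachable set `R⁻(A) = {ζ : ∃ i, Φ(ζ, y_i⁺) ∈ A}`. -/
def Rminus (n N : ℕ) (f : EuclideanSpace ℝ (Fin (2*n-1)) → ℝ → ℝ)
    (chat : ℝ → EuclideanSpace ℝ (Fin (2*n-1)) → ℝ) (yd : Fin N → ℝ)
    (A : Set (EuclideanSpace ℝ (Fin (2*n-1)))) : Set (EuclideanSpace ℝ (Fin (2*n-1))) :=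
  {ζ | ∃ i : Fin N, Phi n f chat ζ (yd i) ∈ A}

/-- `S_δ = {ζ : |ζₙ| ≤ δ}` (the n-th coordinate is index `n-1`, 0-indexed). -/
def Sdelta (n : ℕ) (hn : 1 ≤ n) (δ : ℝ) : Set (EuclideanSpace ℝ (Fin (2*n-1))) :=
  {ζ | |ζ ⟨n - 1, by omega⟩| ≤ δ}

theorem exists_trajectory_of_forall_exists_mem {X ι : Type*} (F : X → ι → X) (B : ℕ → Set X)
    (hB : ∀ t, ∀ x ∈ B t, ∃ i, F x i ∈ B (t + 1)) {x₀ : X} (hx₀ : x₀ ∈ B 0) :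
    ∃ (s : ℕ → ι) (traj : ℕ → X), traj 0 = x₀ ∧ (∀ t, traj (t + 1) = F (traj t) (s t)) ∧
      ∀ t, traj t ∈ B t := by
  choose next hnext using hB
  let seq : ∀ t, B t := fun t =>
    Nat.rec (motive := fun t => B t) ⟨x₀, hx₀⟩ (fun t x => ⟨F x (next t x x.2), hnext t x x.2⟩) t
  exact ⟨fun t => next t (seq t) (seq t).2, fun t => seq t, rfl, fun _ => rfl, fun t => (seq t).2⟩

theorem mem_closedBall_of_norm_sub_le {E : Type*} [SeminormedAddCommGroup E] {γ γinv : ℝ → ℝ}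
    (hγ : MonotoneOn γ (Set.Ici 0)) {ρ : ℝ} (hρ : γ (γinv ρ) = ρ) {a b c d : E}
    (hbound : ‖a - b‖ ≤ γ ‖c - d‖) (hd : d ∈ Metric.closedBall c (γinv ρ)) :
    b ∈ Metric.closedBall a ρ := by
  have hdc : ‖c - d‖ ≤ γinv ρ := by rwa [Metric.mem_closedBall, dist_comm, dist_eq_norm] at hd
  rw [Metric.mem_closedBall, dist_comm, dist_eq_norm]
  calc ‖a - b‖ ≤ γ ‖c - d‖ := hbound
    _ ≤ γ (γinv ρ) := hγ (norm_nonneg _) ((norm_nonneg _).trans hdc) hdc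
    _ = ρ := hρ

theorem iUnion_closedBall_subset_Rminus {n N : ℕ} {f : EuclideanSpace ℝ (Fin (2*n-1)) → ℝ → ℝ}
    {chat : ℝ → EuclideanSpace ℝ (Fin (2*n-1)) → ℝ} {yd : Fin N → ℝ}
    {ζd : Fin N → EuclideanSpace ℝ (Fin (2*n-1))} {ud : Fin N → ℝ} {γ γinv : ℝ → ℝ}
    (hγ : MonotoneOn γ (Set.Ici 0)) (hγinv : ∀ r, 0 ≤ r → γ (γinv r) = r)
    (hbound : ∀ (i : Fin N) (ζ : EuclideanSpace ℝ (Fin (2*n-1))),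
      ‖zplus n (yd i) (ζd i) (ud i) - Phi n f chat ζ (yd i)‖ ≤ γ ‖ζd i - ζ‖)
    {J : Set (Fin N)} {r : Fin N → ℝ} (hr : ∀ i, 0 ≤ r i)
    {B : Set (EuclideanSpace ℝ (Fin (2*n-1)))}
    (hball : ∀ i ∈ J, Metric.closedBall (zplus n (yd i) (ζd i) (ud i)) (r i) ⊆ B) :
    ⋃ i ∈ J, Metric.closedBall (ζd i) (γinv (r i)) ⊆ Rminus n N f chat yd B :=
  Set.iUnion₂_subset fun i hi _ hζ =>
    ⟨i, hball i hi (mem_closedBall_of_norm_sub_le hγ (hγinv _ (hr i)) (hbound i _) hζ)⟩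

/-- Theorem 2: for the explicitly constructed sets
`A⁰, …, A^κ` as in Theorem 1, if `ζ₀ ∈ A^κ` and `A⁰ ⊆ A¹`, then there is an infinite
sequence of reference indices whose closed-loop trajectory satisfies `|(ζ_t)ₙ| ≤ δ`
for all `t ≥ κ` (practical output regulation with accuracy `δ`). -/
theorem stmt_8 (n N κ : ℕ) (hn : 2 ≤ n) (hκ : 1 ≤ κ)
    (f : EuclideanSpace ℝ (Fin (2*n-1)) → ℝ → ℝ)
    (chat : ℝ → EuclideanSpace ℝ (Fin (2*n-1)) → ℝ)
    (yd : Fin N → ℝ) (ζd : Fin N → EuclideanSpace ℝ (Fin (2*n-1))) (ud : Fin N → ℝ)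
    (δ : ℝ)
    (γ γinv : ℝ → ℝ)
    (hγ_mono : StrictMonoOn γ (Set.Ici (0:ℝ)))
    (hγinv_right : ∀ r, 0 ≤ r → γ (γinv r) = r)
    (hγ_bound : ∀ (i : Fin N) (ζ : EuclideanSpace ℝ (Fin (2*n-1))),
      ‖zplus n (yd i) (ζd i) (ud i) - Phi n f chat ζ (yd i)‖ ≤ γ ‖ζd i - ζ‖)
    (A : ℕ → Set (EuclideanSpace ℝ (Fin (2*n-1))))
    (I : ℕ → Set (Fin N)) (r : ℕ → Fin N → ℝ)
    (hr : ∀ j i, 0 ≤ r j i)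
    (hA0 : A 0 = ⋃ i ∈ I 0, Metric.closedBall (zplus n (yd i) (ζd i) (ud i)) (r 0 i))
    (hball0 : ∀ i ∈ I 0,
      Metric.closedBall (zplus n (yd i) (ζd i) (ud i)) (r 0 i) ⊆ Sdelta n (by omega) δ)
    (hAj : ∀ j : ℕ, 1 ≤ j → j ≤ κ →
      A j = ⋃ i ∈ I j, Metric.closedBall (ζd i) (γinv (r j i)))
    (hballj : ∀ j : ℕ, 1 ≤ j → j ≤ κ → ∀ i ∈ I j,
      Metric.closedBall (zplus n (yd i) (ζd i) (ud i)) (r j i) ⊆ A (j - 1))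
    (hA01 : A 0 ⊆ A 1) :
    ∀ ζ0 ∈ A κ, ∃ (idx : ℕ → Fin N) (traj : ℕ → EuclideanSpace ℝ (Fin (2*n-1))),
      traj 0 = ζ0 ∧
      (∀ t : ℕ, traj (t+1) = Phi n f chat (traj t) (yd (idx (t+1)))) ∧
      (∀ t : ℕ, κ ≤ t → |traj t ⟨n - 1, by omega⟩| ≤ δ) := by
  intro ζ0 hζ0
  have hA0_sub : A 0 ⊆ Sdelta n (by omega) δ := hA0 ▸ Set.iUnion₂_subset hball0
  have hAj_sub (j : ℕ) (hj : 1 ≤ j) (hjκ : j ≤ κ) : A j ⊆ Rminus n N f chat yd (A (j - 1)) :=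
    hAj j hj hjκ ▸ iUnion_closedBall_subset_Rminus hγ_mono.monotoneOn hγinv_right hγ_bound
      (hr j) (hballj j hj hjκ)
  have hstep (m : ℕ) (hm : m ≤ κ) : A m ⊆ Rminus n N f chat yd (A (m - 1)) := by
    rcases m with _ | m
    · exact hA01.trans (hAj_sub 1 le_rfl hκ)
    · exact hAj_sub (m + 1) (Nat.succ_pos m) hm
  obtain ⟨s, traj, h0, hsucc, hmem⟩ := exists_trajectory_of_forall_exists_mem
    (fun ζ i => Phi n f chat ζ (yd i)) (fun t => A (κ - t))
    (fun t ζ hζ => by simpa [Rminus, Nat.sub_sub] using hstep (κ - t) (Nat.sub_le κ t) hζ) hζ0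
  refine ⟨fun t => s (t - 1), traj, h0, fun t => hsucc t, fun t ht => hA0_sub ?_⟩
  simpa [Nat.sub_eq_zero_of_le ht] using hmem t
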